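/- Let d ≥ 2, 1 ≤ p < ∞ and α, β > 0. Let F ⊂ ℝ^{d−1} be a (d−1)-simplex and h > 0, and let T ⊂ ℝ^d be the d-simplex T = conv({0} ∪ { (y, h) : y ∈ F }), i.e., the cone with apex at the origin over the copy of F placed at height h in the last coordinate. Then E_{p;α,β;d}(T)^p ≥ (h / (2p + d)) · E_{p;α,β;d−1}(F)^p, where E_{p;α,β;d}(T)^p = inf over affine u on ℝ^d of ∫_T (α(Q_d−u)₊ + β(Q_d−u)₋)^p dx and E_{p;α,β;d−1}(F)^p = inf over affine ℓ on ℝ^{d−1} of ∫_F (α(Q_{d−1}−ℓ)₊ + β(Q_{d−1}−ℓ)₋)^p dy. -/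

import Mathlib

/-!
Slice the cone by the hyperplanes `x_d = t`, `0 < t ≤ h`: the slice is `(t / h) • F`. Writing
`s = t / h` and substituting `y = s • z`, the gap `Q_d - u` restricted to the slice becomes
`s² (Q_{d-1} - ℓ)` for an affine `ℓ` on `ℝ^{d-1}`, so the slice integral equals
`s ^ (d - 1) * s ^ (2p)` times an integral over `F`, which is at least `E(F)^p`.
Integrating `(t / h) ^ (d - 1 + 2p)` over `(0, h]` gives the factor `h / (2p + d)`.
-/

open MeasureTheory Set Pointwise

noncomputable def EpabPow (m : ℕ) (p α β : ℝ) (T : Set (EuclideanSpace ℝ (Fin m))) : ℝ :=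
  ⨅ (a : EuclideanSpace ℝ (Fin m)) (c : ℝ),
    ∫ x in T,
      (α * max ((∑ j, x j ^ 2) - ((inner ℝ a x : ℝ) + c)) 0 +
        β * max (-((∑ j, x j ^ 2) - ((inner ℝ a x : ℝ) + c))) 0) ^ p

theorem convexHull_insert_zero_eq_Icc_smul {𝕜 E : Type*} [Field 𝕜] [LinearOrder 𝕜]
    [IsStrictOrderedRing 𝕜] [AddCommGroup E] [Module 𝕜 E] {X : Set E} (hX : Convex 𝕜 X)
    (hne : X.Nonempty) : convexHull 𝕜 (insert 0 X) = Icc (0 : 𝕜) 1 • X := by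
  ext x
  simp only [convexHull_insert hne, hX.convexHull_eq, convexJoin_singleton_left, mem_iUnion,
    segment_eq_image, smul_zero, zero_add, mem_image, mem_smul, exists_prop]
  grind

theorem setIntegral_smul_set {E : Type*} [NormedAddCommGroup E] [NormedSpace ℝ E]
    [FiniteDimensional ℝ E] [MeasurableSpace E] [BorelSpace E] (μ : Measure E)
    [μ.IsAddHaarMeasure] (f : E → ℝ) (F : Set E) {s : ℝ} (hs : 0 < s) :
    ∫ y in s • F, f y ∂μ = s ^ Module.finrank ℝ E * ∫ z in F, f (s • z) ∂μ := by
  rw [Measure.setIntegral_comp_smul μ f F hs.ne', abs_of_pos (by positivity), smul_eq_mul,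
    mul_inv_cancel_left₀ (by positivity)]

theorem integral_Ioc_div_rpow {h q : ℝ} (hh : 0 < h) (hq : -1 < q) :
    ∫ t in Ioc 0 h, (t / h) ^ q = h / (q + 1) := by
  rw [← intervalIntegral.integral_of_le hh.le,
    intervalIntegral.integral_comp_div (fun u => u ^ q) hh.ne',
    zero_div, div_self hh.ne', integral_rpow (Or.inl hq), Real.one_rpow,
    Real.zero_rpow (by linarith), smul_eq_mul]
  ring

section asymLoss

noncomputable def asymLoss (p α β g : ℝ) : ℝ := (α * max g 0 + β * max (-g) 0) ^ p

variable {p α β : ℝ}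

theorem asymLoss_nonneg (hα : 0 ≤ α) (hβ : 0 ≤ β) (g : ℝ) : 0 ≤ asymLoss p α β g := by
  unfold asymLoss; positivity

theorem asymLoss_mul (hα : 0 ≤ α) (hβ : 0 ≤ β) {k : ℝ} (hk : 0 ≤ k) (g : ℝ) :
    asymLoss p α β (k * g) = k ^ p * asymLoss p α β g := by
  unfold asymLoss
  have hmax (u : ℝ) : max (k * u) 0 = k * max u 0 := by
    rw [mul_max_of_nonneg _ _ hk, mul_zero]
  rw [← mul_neg, hmax, hmax, ← Real.mul_rpow hk (by positivity)]
  congr 1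
  ring

theorem continuous_asymLoss (hp : 0 ≤ p) : Continuous (asymLoss p α β) := by
  unfold asymLoss
  exact (Real.continuous_rpow_const hp).comp (by fun_prop)

end asymLoss

namespace EuclideanSpace

variable {m : ℕ}

-- Written exactly as the lift in `cone_error_lower_bound`, so that `coneOver` unfolds to its cone.
noncomputable def snoc (y : EuclideanSpace ℝ (Fin m)) (t : ℝ) : EuclideanSpace ℝ (Fin (m + 1)) :=
  WithLp.toLp 2 (Fin.snoc (α := fun _ => ℝ) (fun i => y i) t)

@[simp]
theorem snoc_apply_castSucc (y : EuclideanSpace ℝ (Fin m)) (t : ℝ) (i : Fin m) :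
    y.snoc t i.castSucc = y i := by
  simp [snoc]

@[simp]
theorem snoc_apply_last (y : EuclideanSpace ℝ (Fin m)) (t : ℝ) : y.snoc t (Fin.last m) = t := by
  simp [snoc]

theorem exists_snoc_eq (x : EuclideanSpace ℝ (Fin (m + 1))) :
    ∃ (y : EuclideanSpace ℝ (Fin m)) (t : ℝ), y.snoc t = x :=
  ⟨WithLp.toLp 2 (Fin.init x), x (Fin.last m), by
    ext i; induction i using Fin.lastCases <;> simp [Fin.init]⟩

theorem snoc_inj {y y' : EuclideanSpace ℝ (Fin m)} {t t' : ℝ} :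
    y.snoc t = y'.snoc t' ↔ y = y' ∧ t = t' := by
  constructor
  · intro h
    refine ⟨?_, by simpa using congr($h (Fin.last m))⟩
    ext i
    simpa using congr($h i.castSucc)
  · rintro ⟨rfl, rfl⟩
    rfl

theorem smul_snoc (c : ℝ) (y : EuclideanSpace ℝ (Fin m)) (t : ℝ) :
    c • y.snoc t = (c • y).snoc (c * t) := by
  ext i; induction i using Fin.lastCases <;> simp

theorem snoc_add_snoc (y y' : EuclideanSpace ℝ (Fin m)) (t t' : ℝ) :
    y.snoc t + y'.snoc t' = (y + y').snoc (t + t') := by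
  ext i; induction i using Fin.lastCases <;> simp

theorem inner_snoc_snoc (x y : EuclideanSpace ℝ (Fin m)) (s t : ℝ) :
    inner ℝ (x.snoc s) (y.snoc t) = inner ℝ x y + s * t := by
  simp [PiLp.inner_apply, Fin.sum_univ_castSucc, mul_comm]

@[fun_prop]
theorem continuous_snoc_left (t : ℝ) : Continuous fun y : EuclideanSpace ℝ (Fin m) => y.snoc t := by
  unfold snoc
  fun_prop

noncomputable def snocMeasurableEquiv (m : ℕ) :
    ℝ × EuclideanSpace ℝ (Fin m) ≃ᵐ EuclideanSpace ℝ (Fin (m + 1)) :=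
  ((MeasurableEquiv.refl ℝ).prodCongr (MeasurableEquiv.toLp 2 (Fin m → ℝ)).symm).trans <|
    (MeasurableEquiv.piFinSuccAbove (fun _ => ℝ) (Fin.last m)).symm.trans
      (MeasurableEquiv.toLp 2 _)

theorem snocMeasurableEquiv_apply (q : ℝ × EuclideanSpace ℝ (Fin m)) :
    snocMeasurableEquiv m q = q.2.snoc q.1 := by
  simp only [snocMeasurableEquiv, MeasurableEquiv.piFinSuccAbove, Fin.insertNthEquiv,
    Fin.insertNth_last', Fin.removeNth_last, Equiv.symm_mk, MeasurableEquiv.symm_mk,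
    MeasurableEquiv.trans_apply, MeasurableEquiv.coe_mk, Equiv.coe_fn_mk,
    MeasurableEquiv.toLp_apply, snoc, WithLp.toLp.injEq, Fin.snoc_inj]
  exact ⟨rfl, rfl⟩

theorem measurePreserving_snocMeasurableEquiv (m : ℕ) :
    MeasurePreserving (snocMeasurableEquiv m) :=
  ((MeasurePreserving.id volume).prod
      (EuclideanSpace.volume_preserving_symm_measurableEquiv_toLp (Fin m))).trans <|
    (volume_preserving_piFinSuccAbove (fun _ => ℝ) (Fin.last m)).symm.trans
      (PiLp.volume_preserving_toLp (Fin (m + 1)))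

section Slices

variable {T : Set (EuclideanSpace ℝ (Fin (m + 1)))} {g : EuclideanSpace ℝ (Fin (m + 1)) → ℝ}

theorem measurable_snoc_left (t : ℝ) :
    Measurable fun y : EuclideanSpace ℝ (Fin m) => y.snoc t := by
  simpa only [Function.comp_def, snocMeasurableEquiv_apply] using
    (snocMeasurableEquiv m).measurable.comp (measurable_prodMk_left (x := t))

theorem integrable_indicator_snoc (hT : MeasurableSet T) (hg : IntegrableOn g T) :
    Integrable (fun q : ℝ × EuclideanSpace ℝ (Fin m) => T.indicator g (q.2.snoc q.1))
      ((volume : Measure ℝ).prod volume) := by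
  simp_rw [← snocMeasurableEquiv_apply]
  exact ((measurePreserving_snocMeasurableEquiv m).integrable_comp_emb
    (snocMeasurableEquiv m).measurableEmbedding).2 ((integrable_indicator_iff hT).2 hg)

theorem integral_indicator_snoc (hT : MeasurableSet T) (t : ℝ) :
    ∫ y : EuclideanSpace ℝ (Fin m), T.indicator g (y.snoc t) =
      ∫ y in {y : EuclideanSpace ℝ (Fin m) | y.snoc t ∈ T}, g (y.snoc t) :=
  integral_indicator (f := fun y => g (y.snoc t)) (hT.preimage (measurable_snoc_left t))

theorem setIntegral_eq_integral_integral_snoc (hT : MeasurableSet T) (hg : IntegrableOn g T) :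
    ∫ x in T, g x = ∫ t, ∫ y in {y : EuclideanSpace ℝ (Fin m) | y.snoc t ∈ T}, g (y.snoc t) := by
  rw [← integral_indicator hT, ← (measurePreserving_snocMeasurableEquiv m).integral_comp
    (snocMeasurableEquiv m).measurableEmbedding, Measure.volume_eq_prod]
  simp only [snocMeasurableEquiv_apply, ← integral_indicator_snoc hT]
  exact integral_prod _ (integrable_indicator_snoc hT hg)

theorem setIntegral_le_setIntegral_of_le_slices (hT : MeasurableSet T) (hg : IntegrableOn g T)
    (hg0 : ∀ x, 0 ≤ g x) {S : Set ℝ} (hS : MeasurableSet S) {φ : ℝ → ℝ} (hφ : IntegrableOn φ S)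
    (hslice : ∀ t ∈ S, φ t ≤ ∫ y in {y : EuclideanSpace ℝ (Fin m) | y.snoc t ∈ T}, g (y.snoc t)) :
    ∫ t in S, φ t ≤ ∫ x in T, g x := by
  rw [setIntegral_eq_integral_integral_snoc hT hg, ← integral_indicator hS]
  refine integral_mono ((integrable_indicator_iff hS).2 hφ) ?_ fun t => ?_
  · simpa only [integral_indicator_snoc hT] using
      (integrable_indicator_snoc hT hg).integral_prod_left
  · by_cases ht : t ∈ S
    · rw [indicator_of_mem ht]; exact hslice t ht
    · rw [indicator_of_notMem ht]; exact integral_nonneg fun y => hg0 _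

end Slices

noncomputable def coneOver (F : Set (EuclideanSpace ℝ (Fin m))) (h : ℝ) :
    Set (EuclideanSpace ℝ (Fin (m + 1))) :=
  convexHull ℝ ({0} ∪ (fun y => y.snoc h) '' F)

variable {F : Set (EuclideanSpace ℝ (Fin m))} {h : ℝ}

theorem convex_image_snoc (hF : Convex ℝ F) (h : ℝ) : Convex ℝ ((fun y => y.snoc h) '' F) := by
  rintro _ ⟨y, hy, rfl⟩ _ ⟨y', hy', rfl⟩ a b ha hb hab
  refine ⟨a • y + b • y', hF hy hy' ha hb hab, ?_⟩
  simp only [smul_snoc, snoc_add_snoc, ← add_mul, hab, one_mul]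

theorem coneOver_eq_Icc_smul (hF : Convex ℝ F) (hne : F.Nonempty) (h : ℝ) :
    coneOver F h = Icc (0 : ℝ) 1 • (fun y => y.snoc h) '' F := by
  rw [coneOver, singleton_union,
    convexHull_insert_zero_eq_Icc_smul (convex_image_snoc hF h) (hne.image _)]

theorem isCompact_coneOver (hF : IsCompact F) (hFc : Convex ℝ F) (hne : F.Nonempty) (h : ℝ) :
    IsCompact (coneOver F h) := by
  rw [coneOver_eq_Icc_smul hFc hne]
  exact isCompact_Icc.smul_set (hF.image (continuous_snoc_left h))

theorem setOf_snoc_mem_coneOver (hF : Convex ℝ F) (hne : F.Nonempty) (hh : 0 < h) {t : ℝ}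
    (ht : t ∈ Ioc 0 h) :
    {y : EuclideanSpace ℝ (Fin m) | y.snoc t ∈ coneOver F h} = (t / h) • F := by
  ext y
  simp only [coneOver_eq_Icc_smul hF hne, mem_ofPred, mem_smul, mem_image, mem_Icc,
    exists_exists_and_eq_and, smul_snoc, snoc_inj, mem_smul_set]
  constructor
  · rintro ⟨θ, -, z, hz, rfl, rfl⟩
    exact ⟨z, hz, by rw [mul_div_cancel_right₀ _ hh.ne']⟩
  · rintro ⟨z, hz, rfl⟩
    exact ⟨t / h, ⟨div_nonneg ht.1.le hh.le, (div_le_one hh).2 ht.2⟩, z, hz, rfl,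
      div_mul_cancel₀ _ hh.ne'⟩

end EuclideanSpace

section quadSubAffine

variable {m : ℕ}

noncomputable def quadSubAffine (a : EuclideanSpace ℝ (Fin m)) (c : ℝ)
    (x : EuclideanSpace ℝ (Fin m)) : ℝ :=
  (∑ j, x j ^ 2) - (inner ℝ a x + c)

theorem quadSubAffine_eq (a : EuclideanSpace ℝ (Fin m)) (c : ℝ) (x : EuclideanSpace ℝ (Fin m)) :
    quadSubAffine a c x = inner ℝ x x - (inner ℝ a x + c) := by
  simp only [quadSubAffine, PiLp.inner_apply, RCLike.inner_apply, conj_trivial, sq]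

theorem continuous_quadSubAffine (a : EuclideanSpace ℝ (Fin m)) (c : ℝ) :
    Continuous (quadSubAffine a c) := by
  unfold quadSubAffine
  fun_prop

theorem quadSubAffine_snoc_smul (b : EuclideanSpace ℝ (Fin m)) (r c t : ℝ) {s : ℝ} (hs : s ≠ 0)
    (z : EuclideanSpace ℝ (Fin m)) :
    quadSubAffine (b.snoc r) c ((s • z).snoc t) =
      s ^ 2 * quadSubAffine (s⁻¹ • b) ((r * t + c - t ^ 2) / s ^ 2) z := by
  simp only [quadSubAffine_eq, EuclideanSpace.inner_snoc_snoc, inner_smul_left, inner_smul_right,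
    RCLike.conj_to_real]
  field_simp
  ring

end quadSubAffine

theorem EpabPow_eq_iInf (m : ℕ) (p α β : ℝ) (T : Set (EuclideanSpace ℝ (Fin m))) :
    EpabPow m p α β T = ⨅ (a) (c), ∫ x in T, asymLoss p α β (quadSubAffine a c x) :=
  rfl

theorem EpabPow_le_integral {m : ℕ} {p α β : ℝ} (hα : 0 ≤ α) (hβ : 0 ≤ β)
    (T : Set (EuclideanSpace ℝ (Fin m))) (a : EuclideanSpace ℝ (Fin m)) (c : ℝ) :
    EpabPow m p α β T ≤ ∫ x in T, asymLoss p α β (quadSubAffine a c x) := by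
  have hnonneg : ∀ a c, 0 ≤ ∫ x in T, asymLoss p α β (quadSubAffine a c x) :=
    fun a c => integral_nonneg fun x => asymLoss_nonneg hα hβ _
  exact (ciInf_le ⟨0, forall_mem_range.2 fun a => Real.iInf_nonneg (hnonneg a)⟩ a).trans
    (ciInf_le ⟨0, forall_mem_range.2 (hnonneg a)⟩ c)

theorem rpow_mul_EpabPow_le_integral_slice {m : ℕ} {p α β : ℝ} (hα : 0 ≤ α) (hβ : 0 ≤ β)
    (F : Set (EuclideanSpace ℝ (Fin m))) (a : EuclideanSpace ℝ (Fin (m + 1))) (c t : ℝ) {s : ℝ}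
    (hs : 0 < s) :
    s ^ ((m : ℝ) + 2 * p) * EpabPow m p α β F ≤
      ∫ y in s • F, asymLoss p α β (quadSubAffine a c (y.snoc t)) := by
  obtain ⟨b, r, rfl⟩ := EuclideanSpace.exists_snoc_eq a
  have hscale (z : EuclideanSpace ℝ (Fin m)) :
      asymLoss p α β (quadSubAffine (b.snoc r) c ((s • z).snoc t)) =
        (s ^ 2) ^ p * asymLoss p α β (quadSubAffine (s⁻¹ • b) ((r * t + c - t ^ 2) / s ^ 2) z) := by
    rw [quadSubAffine_snoc_smul b r c t hs.ne', asymLoss_mul hα hβ (by positivity)]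
  rw [setIntegral_smul_set _ _ _ hs, finrank_euclideanSpace_fin]
  simp only [hscale, integral_const_mul]
  have hpow : s ^ ((m : ℝ) + 2 * p) = s ^ m * (s ^ 2) ^ p := by
    rw [Real.rpow_add hs, Real.rpow_natCast, ← Real.rpow_natCast s 2, ← Real.rpow_mul hs.le]
    norm_num
  rw [hpow, mul_assoc]
  gcongr
  exact EpabPow_le_integral hα hβ F _ _

theorem cone_error_lower_bound_general
    (m : ℕ) (p α β : ℝ) (hp : 1 ≤ p) (hα : 0 < α) (hβ : 0 < β)
    (w : Fin (m + 1) → EuclideanSpace ℝ (Fin m))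
    (h : ℝ) (hh : 0 < h)
    (F : Set (EuclideanSpace ℝ (Fin m)))
    (hF : F = convexHull ℝ (Set.range w))
    (T : Set (EuclideanSpace ℝ (Fin (m + 1))))
    (hT : T = convexHull ℝ
      ({0} ∪ (fun y : EuclideanSpace ℝ (Fin m) =>
        (WithLp.toLp 2 (Fin.snoc (α := fun _ => ℝ) (fun i => y i) h : Fin (m + 1) → ℝ) : EuclideanSpace ℝ (Fin (m + 1)))) '' F)) :
    EpabPow (m + 1) p α β T ≥ (h / (2 * p + (m + 1))) * EpabPow m p α β F := by
  have hFcompact : IsCompact F := hF ▸ (finite_range w).isCompact_convexHull ℝ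
  have hFconvex : Convex ℝ F := hF ▸ convex_convexHull ℝ _
  have hFne : F.Nonempty := hF ▸ (range_nonempty w).convexHull
  replace hT : T = EuclideanSpace.coneOver F h := hT
  have hTcompact : IsCompact T := hT ▸ EuclideanSpace.isCompact_coneOver hFcompact hFconvex hFne h
  have hp0 : 0 ≤ p := by linarith
  have hexp : (0 : ℝ) ≤ m + 2 * p := by positivity
  rw [ge_iff_le, EpabPow_eq_iInf]
  refine le_ciInf fun a => le_ciInf fun c => ?_
  have hloss_integrable : IntegrableOn (fun x => asymLoss p α β (quadSubAffine a c x)) T :=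
    ContinuousOn.integrableOn_compact hTcompact
      ((continuous_asymLoss hp0).comp (continuous_quadSubAffine a c)).continuousOn
  have hpow_integrable : IntegrableOn
      (fun t : ℝ => (t / h) ^ ((m : ℝ) + 2 * p) * EpabPow m p α β F) (Ioc 0 h) :=
    Continuous.integrableOn_Ioc (by fun_prop (disch := exact hexp))
  calc h / (2 * p + (m + 1)) * EpabPow m p α β F
      = ∫ t in Ioc 0 h, (t / h) ^ ((m : ℝ) + 2 * p) * EpabPow m p α β F := by
        rw [integral_mul_const, integral_Ioc_div_rpow hh (by linarith)]
        ring
    _ ≤ ∫ x in T, asymLoss p α β (quadSubAffine a c x) := by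
        refine EuclideanSpace.setIntegral_le_setIntegral_of_le_slices hTcompact.measurableSet
          hloss_integrable (fun x => asymLoss_nonneg hα.le hβ.le _) measurableSet_Ioc
          hpow_integrable fun t ht => ?_
        rw [hT, EuclideanSpace.setOf_snoc_mem_coneOver hFconvex hFne hh ht]
        exact rpow_mul_EpabPow_le_integral_slice hα.le hβ.le F a c t (div_pos ht.1 hh)

/-- For the cone `T ⊂ ℝ^d` (`d = m + 1 ≥ 2`) with apex at the origin over a copy of a
`(d-1)`-simplex `F ⊂ ℝ^{d-1}` placed at height `h > 0` in the last coordinate, the `p`-th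
power of the asymmetric `L_p`-error of best affine approximation of `Q` on `T` is at
least `h / (2p + d)` times the corresponding `p`-th power of the error on `F`. -/
theorem cone_error_lower_bound
    (m : ℕ) (hm : 1 ≤ m) (p α β : ℝ) (hp : 1 ≤ p) (hα : 0 < α) (hβ : 0 < β)
    (w : Fin (m + 1) → EuclideanSpace ℝ (Fin m))
    (hw : AffineIndependent ℝ w)
    (h : ℝ) (hh : 0 < h)
    (F : Set (EuclideanSpace ℝ (Fin m)))
    (hF : F = convexHull ℝ (Set.range w))
    (T : Set (EuclideanSpace ℝ (Fin (m + 1))))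
    (hT : T = convexHull ℝ
      ({0} ∪ (fun y : EuclideanSpace ℝ (Fin m) =>
        (WithLp.toLp 2 (Fin.snoc (α := fun _ => ℝ) (fun i => y i) h : Fin (m + 1) → ℝ) : EuclideanSpace ℝ (Fin (m + 1)))) '' F)) :
    EpabPow (m + 1) p α β T ≥ (h / (2 * p + (m + 1))) * EpabPow m p α β F :=
  cone_error_lower_bound_general m p α β hp hα hβ w h hh F hF T hT
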